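/- arXiv:1806.01877 — 6 statements merged into one kernel-verified Lean document; each statement's English description precedes it below -/
import Mathlib

section
/- Let V be a finite-dimensional real vector space, g a symmetric bilinear form on V, ω a nonzero linear functional on V, and H = ker ω. Suppose the restriction of g to H is non-degenerate. For ξ ∈ V with ω(ξ) ≠ 0, define the bilinear form A(ξ) on V by A(ξ)(w,η) = g(w,η) − ω(ξ)⁻¹(g(w,ξ)ω(η) + ω(w)g(ξ,η)) + ω(ξ)⁻²·g(ξ,ξ)·ω(w)ω(η). Then the kernel of the linear map η ↦ A(ξ)(·,η) is exactly the line ℝξ. -/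
/-!
Put `c = ω η / ω ξ`. Evaluated at `w ∈ ker ω`, the form `A(ξ)(w, η)` reduces to `g(w, η - c ξ)`,
and `η - c ξ ∈ ker ω`; so if `A(ξ)(·, η) = 0`, non-degeneracy of `g` on `ker ω` forces
`η = c ξ`. Conversely `A(ξ)(·, ξ) = 0` is a direct computation.
-/

lemma eq_smul_of_apply_ker_eq {V : Type*} [AddCommGroup V] [Module ℝ V]
    (g : V →ₗ[ℝ] V →ₗ[ℝ] ℝ) (hg : ∀ v w, g v w = g w v) (ω : V →ₗ[ℝ] ℝ)
    (hnd : ∀ v, ω v = 0 → (∀ w, ω w = 0 → g v w = 0) → v = 0)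
    {ξ : V} (hξ : ω ξ ≠ 0) {η : V}
    (h : ∀ w, ω w = 0 → g w η = ω η / ω ξ * g w ξ) :
    η = (ω η / ω ξ) • ξ := by
  refine sub_eq_zero.mp (hnd _ ?_ fun w hw => ?_)
  · simp only [map_sub, map_smul, smul_eq_mul]
    field_simp
    ring
  · rw [hg, map_sub, map_smul, smul_eq_mul, h w hw, sub_self]

theorem stmt0_general {V : Type*} [AddCommGroup V] [Module ℝ V]
    (g : V →ₗ[ℝ] V →ₗ[ℝ] ℝ) (hg : ∀ v w, g v w = g w v)
    (ω : V →ₗ[ℝ] ℝ)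
    (hnd : ∀ v, ω v = 0 → (∀ w, ω w = 0 → g v w = 0) → v = 0)
    (ξ : V) (hξ : ω ξ ≠ 0) (η : V) :
    (∀ w : V,
      g w η - (ω ξ)⁻¹ * (g w ξ * ω η + ω w * g ξ η)
        + ((ω ξ)⁻¹) ^ 2 * (g ξ ξ * (ω w * ω η)) = 0)
      ↔ ∃ c : ℝ, η = c • ξ := by
  constructor
  · intro hA
    refine ⟨ω η / ω ξ, eq_smul_of_apply_ker_eq g hg ω hnd hξ fun w hw => ?_⟩
    have hAw := hA w
    simp only [hw, zero_mul, mul_zero, add_zero, sub_eq_zero] at hAw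
    rw [hAw]
    ring
  · rintro ⟨c, rfl⟩ w
    simp only [map_smul, smul_eq_mul]
    field_simp
    ring

/-- The kernel of the Hessian-type form `A(ξ)` of a Kropina Lagrangian is exactly `ℝξ`. -/
theorem stmt0 {V : Type*} [AddCommGroup V] [Module ℝ V] [FiniteDimensional ℝ V]
    (g : V →ₗ[ℝ] V →ₗ[ℝ] ℝ) (hg : ∀ v w, g v w = g w v)
    (ω : V →ₗ[ℝ] ℝ) (hω : ω ≠ 0)
    (hnd : ∀ v, ω v = 0 → (∀ w, ω w = 0 → g v w = 0) → v = 0)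
    (ξ : V) (hξ : ω ξ ≠ 0) (η : V) :
    (∀ w : V,
      g w η - (ω ξ)⁻¹ * (g w ξ * ω η + ω w * g ξ η)
        + ((ω ξ)⁻¹) ^ 2 * (g ξ ξ * (ω w * ω η)) = 0)
      ↔ ∃ c : ℝ, η = c • ξ :=
  stmt0_general g hg ω hnd ξ hξ η
end

section
/- Let V be a finite-dimensional real vector space with a non-degenerate symmetric bilinear form g, let ω ∈ V with g(ω,ω) ≠ 0, and set H = {v : g(ω,v)=0}. Let π denote the g-orthogonal projection onto H. Suppose b ∈ V satisfies g(ξ, b) = 0 for some ξ with g(ω,ξ) ≠ 0, and A is the operator Aη = η − (g(ω,η)/g(ω,ξ))ξ − (g(ξ,η)/g(ω,ξ))ω + (g(ξ,ξ)g(ω,η)/g(ω,ξ)²)ω. Then A(π(b)) = b. -/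
/-! `π b = b - c ω` with `c = g(ω,b)/g(ω,ω)` lies in `H`, so the two terms of `A (π b)` carrying
`g(ω, π b)` vanish. Since `g(ξ,b) = 0`, symmetry gives `g(ξ, π b) = -c g(ω,ξ)`, so the remaining
correction term is `c ω`, which restores `b`. -/

namespace LinearMap

variable {K V : Type*} [Field K] [AddCommGroup V] [Module K V]

theorem apply_sub_smul_div_self_eq_zero (g : V →ₗ[K] V →ₗ[K] K) {ω : V} (hω : g ω ω ≠ 0)
    (b : V) : g ω (b - (g ω b / g ω ω) • ω) = 0 := by
  rw [map_sub, map_smul, smul_eq_mul, div_mul_cancel₀ _ hω, sub_self]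

end LinearMap

theorem stmt3_general {V : Type*} [AddCommGroup V] [Module ℝ V]
    (g : V →ₗ[ℝ] V →ₗ[ℝ] ℝ) (hg : ∀ v w, g v w = g w v)
    (ω ξ b : V) (hωω : g ω ω ≠ 0) (hξ : g ω ξ ≠ 0) (hb : g ξ b = 0) :
    (fun η : V => η - (g ω η / g ω ξ) • ξ - (g ξ η / g ω ξ) • ω
        + ((g ξ ξ * g ω η) / (g ω ξ) ^ 2) • ω)
      (b - (g ω b / g ω ω) • ω) = b := by
  set c := g ω b / g ω ω
  have hωπ : g ω (b - c • ω) = 0 := g.apply_sub_smul_div_self_eq_zero hωω b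
  have hξπ : g ξ (b - c • ω) / g ω ξ = -c := by
    rw [map_sub, map_smul, smul_eq_mul, hb, hg ξ ω, zero_sub, neg_div, mul_div_cancel_right₀ _ hξ]
  simp only [hωπ, hξπ, zero_div, zero_smul, mul_zero, sub_zero, add_zero, neg_smul,
    sub_neg_eq_add, sub_add_cancel]

/-- If `g(ξ,b) = 0` then `η = π(b)` (the `g`-orthogonal projection of `b` onto
`H = {v : g(ω,v)=0}`) solves `A η = b`, where `A` is the Hessian operator of the
Kropina Lagrangian. -/
theorem stmt3 {V : Type*} [AddCommGroup V] [Module ℝ V] [FiniteDimensional ℝ V]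
    (g : V →ₗ[ℝ] V →ₗ[ℝ] ℝ) (hg : ∀ v w, g v w = g w v)
    (hnd : ∀ v, (∀ w, g v w = 0) → v = 0)
    (ω ξ b : V) (hωω : g ω ω ≠ 0) (hξ : g ω ξ ≠ 0) (hb : g ξ b = 0) :
    (fun η : V => η - (g ω η / g ω ξ) • ξ - (g ξ η / g ω ξ) • ω
        + ((g ξ ξ * g ω η) / (g ω ξ) ^ 2) • ω)
      (b - (g ω b / g ω ω) • ω) = b :=
  stmt3_general g hg ω ξ b hωω hξ hb
end

section
/- Let V be a real vector space of dimension n−1 ≥ 3 over ℝ, h a non-degenerate symmetric bilinear form on V, ĥ a symmetric bilinear form on V, a and b nonzero linear functionals on V. If for all ξ ∈ V one has ĥ(ξ,ξ)·a(ξ) = h(ξ,ξ)·b(ξ), then there exists a constant c ∈ ℝ with b = c·a and ĥ = c·h. -/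
open Polynomial

private lemma aux_poly (q0 q1 q2 r0 r1 : ℝ)
    (h : ∀ t : ℝ, (q0 + q1 * t + q2 * t ^ 2) * (r0 + r1 * t) = 0)
    (hq : q0 ≠ 0 ∨ q2 ≠ 0) : r0 = 0 ∧ r1 = 0 := by
  have hQ : (C q0 + C q1 * X + C q2 * X ^ 2 : ℝ[X]) ≠ 0 := by
    intro h0
    rcases hq with h1 | h1
    · have := congrArg (fun p => Polynomial.coeff p 0) h0
      simp at this
      exact h1 this
    · have := congrArg (fun p => Polynomial.coeff p 2) h0
      simp at this
      exact h1 this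
  by_contra hr
  have hR : (C r0 + C r1 * X : ℝ[X]) ≠ 0 := by
    intro h0
    apply hr
    constructor
    · have := congrArg (fun p => Polynomial.coeff p 0) h0
      simpa using this
    · have := congrArg (fun p => Polynomial.coeff p 1) h0
      simpa using this
  have hP : ((C q0 + C q1 * X + C q2 * X ^ 2) * (C r0 + C r1 * X) : ℝ[X]) = 0 := by
    apply Polynomial.funext
    intro t
    simpa using h t
  exact mul_ne_zero hQ hR hP

/-- If `ĥ(ξ,ξ)a(ξ) = h(ξ,ξ)b(ξ)` on a space of dimension ≥ 3 with `h` non-degenerate,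
then `b = c·a` and `ĥ = c·h` for a constant `c`. -/
theorem stmt4 {V : Type*} [AddCommGroup V] [Module ℝ V] [FiniteDimensional ℝ V]
    (hdim : 3 ≤ Module.finrank ℝ V)
    (h hhat : V →ₗ[ℝ] V →ₗ[ℝ] ℝ)
    (hsymm : ∀ v w, h v w = h w v) (hhatsymm : ∀ v w, hhat v w = hhat w v)
    (hnd : ∀ v, (∀ w, h v w = 0) → v = 0)
    (a b : V →ₗ[ℝ] ℝ) (ha : a ≠ 0) (hb : b ≠ 0)
    (key : ∀ ξ : V, hhat ξ ξ * a ξ = h ξ ξ * b ξ) :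
    ∃ c : ℝ, b = c • a ∧ hhat = c • h := by
  -- pick u with a u = 1
  obtain ⟨v, hv⟩ : ∃ v, a v ≠ 0 := by
    by_contra h'
    push_neg at h'
    exact ha (by ext w; simpa using h' w)
  set u : V := (a v)⁻¹ • v with hu_def
  have hau : a u = 1 := by
    simp [hu_def, inv_mul_cancel₀ hv]
  -- Step 1: there is η with a η = 0 and h η η ≠ 0
  obtain ⟨η, haη, hhη⟩ : ∃ η, a η = 0 ∧ h η η ≠ 0 := by
    by_contra h'
    push_neg at h'
    -- polarization: h vanishes on ker a
    have hzero : ∀ ξ w, a ξ = 0 → a w = 0 → h ξ w = 0 := by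
      intro ξ w hξ hw
      have h1 := h' (ξ + w) (by simp [hξ, hw])
      have h2 := h' ξ hξ
      have h3 := h' w hw
      have hsym := hsymm ξ w
      simp only [map_add, LinearMap.add_apply] at h1
      linarith
    -- find nonzero ξ in ker a ∩ ker (h · u)
    set L : V →ₗ[ℝ] ℝ × ℝ := a.prod (h.flip u) with hL
    have hrk := LinearMap.finrank_range_add_finrank_ker L
    have hrange : Module.finrank ℝ (LinearMap.range L) ≤ 2 := by
      calc Module.finrank ℝ (LinearMap.range L) ≤ Module.finrank ℝ (ℝ × ℝ) :=
            Submodule.finrank_le _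
        _ = 2 := by simp
    have hkerpos : 0 < Module.finrank ℝ (LinearMap.ker L) := by omega
    obtain ⟨⟨ξ, hξmem⟩, hξne⟩ :=
      Module.finrank_pos_iff_exists_ne_zero.mp hkerpos
    have hξ0 : ξ ≠ 0 := by
      simpa [Submodule.mk_eq_zero] using hξne
    rw [LinearMap.mem_ker, hL, LinearMap.prod_apply] at hξmem
    have haξ : a ξ = 0 := congrArg Prod.fst hξmem
    have hhξu : h ξ u = 0 := congrArg Prod.snd hξmem
    apply hξ0
    apply hnd
    intro w
    have hw0 : a (w - a w • u) = 0 := by simp [hau]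
    have := hzero ξ (w - a w • u) haξ hw0
    have hexp : h ξ w = h ξ (w - a w • u) + a w * h ξ u := by
      simp [map_sub, map_smul]
    rw [hexp, this, hhξu]
    ring
  -- Step 2: b vanishes on ker a
  have hbker : ∀ ξ, a ξ = 0 → b ξ = 0 := by
    intro ξ0 hξ0
    have hpoly : ∀ t : ℝ,
        (h ξ0 ξ0 + (h ξ0 η + h η ξ0) * t + h η η * t ^ 2) * (b ξ0 + b η * t) = 0 := by
      intro t
      have hk := key (ξ0 + t • η)
      have ha' : a (ξ0 + t • η) = 0 := by simp [hξ0, haη]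
      rw [ha', mul_zero] at hk
      have : h (ξ0 + t • η) (ξ0 + t • η) * b (ξ0 + t • η) = 0 := hk.symm
      simp only [map_add, map_smul, LinearMap.add_apply, LinearMap.smul_apply,
        smul_eq_mul] at this
      linear_combination this
    obtain ⟨h1, h2⟩ := aux_poly _ _ _ _ _ hpoly (Or.inr hhη)
    exact h1
  -- Step 3: b = c • a
  set c : ℝ := b u with hc
  have hba : ∀ ξ, b ξ = c * a ξ := by
    intro ξ
    have h0 : a (ξ - a ξ • u) = 0 := by simp [hau]
    have := hbker _ h0
    simp only [map_sub, map_smul, smul_eq_mul] at this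
    linarith [this]
  -- Step 4: diagonal of hhat - c • h vanishes
  have hdiag : ∀ ξ, hhat ξ ξ = c * h ξ ξ := by
    intro ξ0
    by_contra hne
    have hgen : ∀ ξ, (hhat ξ ξ - c * h ξ ξ) * a ξ = 0 := by
      intro ξ
      have hk := key ξ
      rw [hba ξ] at hk
      linear_combination hk
    have haξ0 : a ξ0 = 0 := by
      have := hgen ξ0
      rcases mul_eq_zero.mp this with h1 | h1
      · exact absurd (by linarith : hhat ξ0 ξ0 = c * h ξ0 ξ0) hne
      · exact h1
    have hpoly : ∀ t : ℝ,
        ((hhat ξ0 ξ0 - c * h ξ0 ξ0) +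
          ((hhat ξ0 u + hhat u ξ0) - c * (h ξ0 u + h u ξ0)) * t +
          (hhat u u - c * h u u) * t ^ 2) * (a ξ0 + a u * t) = 0 := by
      intro t
      have := hgen (ξ0 + t • u)
      simp only [map_add, map_smul, LinearMap.add_apply, LinearMap.smul_apply,
        smul_eq_mul] at this
      linear_combination this
    obtain ⟨h1, h2⟩ := aux_poly _ _ _ _ _ hpoly
      (Or.inl (by intro h0; exact hne (by linarith)))
    rw [hau] at h2
    exact one_ne_zero h2
  -- polarization to get full equality
  have hfull : ∀ x y, hhat x y = c * h x y := by
    intro x y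
    have h1 := hdiag (x + y)
    have h2 := hdiag x
    have h3 := hdiag y
    simp only [map_add, LinearMap.add_apply] at h1
    have hs1 := hsymm x y
    have hs2 := hhatsymm x y
    linear_combination (h1 - h2 - h3 + hs2) / 2 - (c / 2) * hs1
  refine ⟨c, ?_, ?_⟩
  · ext ξ; simpa using hba ξ
  · ext x y; simpa using hfull x y
end

section
/- Let V be a 2-dimensional real vector space, h and ĥ non-degenerate symmetric bilinear forms on V, and B a nonzero skew-symmetric bilinear form on V. If for all ξ ∈ V, ĥ(ξ,ξ)·(ĥ⁻¹B)(ξ) = h(ξ,ξ)·(h⁻¹B)(ξ) as vectors in V (where h⁻¹B denotes the endomorphism obtained by raising an index of B with h), then ĥ = c·h for some nonzero constant c. -/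
/-!
Since `h(T·,·) = B ≠ 0`, the form `h` is nonzero, so some `ξ` has `h(ξ,ξ) ≠ 0`. In dimension two a
nonzero alternating form is non-degenerate, so `Tξ ≠ 0`, and `Tξ` is `h`-orthogonal to `ξ`; hence
`ξ, Tξ` is a basis. Pairing the hypothesis at `ξ` with `u` under `ĥ` gives
`h(ξ,ξ)·ĥ(Tξ,u) = ĥ(ξ,ξ)·B(ξ,u) = ĥ(ξ,ξ)·h(Tξ,u)`, so with `c = ĥ(ξ,ξ)/h(ξ,ξ)` the symmetric
forms `ĥ` and `c·h` agree on `(ξ,ξ)` and on `(Tξ,·)`, hence everywhere. Finally `c ≠ 0` because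
`ĥ(That ·, ·) = B ≠ 0`.
-/

open Module

section BilinearPairs

variable {K V : Type*} [Field K] [AddCommGroup V] [Module K V]

theorem ne_zero_of_comp_eq {W : Type*} [AddCommGroup W] [Module K W]
    {h : V →ₗ[K] V →ₗ[K] K} {B : W →ₗ[K] V →ₗ[K] K} {T : W →ₗ[K] V}
    (hT : ∀ ξ w, h (T ξ) w = B ξ w) (hB : B ≠ 0) : h ≠ 0 := by
  rintro rfl
  exact hB (LinearMap.ext₂ fun ξ w => by simp [← hT])

theorem apply_ne_zero_of_isAlt_of_finrank_eq_two (hdim : finrank K V = 2)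
    {B : V →ₗ[K] V →ₗ[K] K} (hB : B ≠ 0) (halt : ∀ v, B v v = 0) {ξ : V} (hξ : ξ ≠ 0) :
    B ξ ≠ 0 := by
  intro hBξ
  obtain ⟨η, hξη⟩ := exists_linearIndependent_pair_of_one_lt_finrank (hdim ▸ one_lt_two) hξ
  let b := basisOfLinearIndependentOfCardEqFinrank hξη (by simp [hdim])
  refine hB (LinearMap.ext_basis b b fun i j => ?_)
  have hηξ : B η ξ = 0 := by
    simpa [hBξ, halt] using halt (ξ + η)
  fin_cases i <;> fin_cases j <;> simp [b, hBξ, hηξ, halt]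

theorem linearIndependent_pair_of_apply_eq_zero {f : V →ₗ[K] V →ₗ[K] K} {x y : V}
    (hx : f x x ≠ 0) (hyx : f y x = 0) (hy : y ≠ 0) : LinearIndependent K ![x, y] := by
  refine linearIndependent_fin2.mpr ⟨hy, fun a hax => hx ?_⟩
  simp only [Matrix.cons_val_one, Matrix.cons_val_zero] at hax
  nth_rewrite 1 [← hax]
  rw [map_smul, LinearMap.smul_apply, hyx, smul_zero]

theorem bilin_eq_of_linearIndependent_pair (hdim : finrank K V = 2)
    {f g : V →ₗ[K] V →ₗ[K] K} (hf : ∀ v w, f v w = f w v) (hg : ∀ v w, g v w = g w v)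
    {x y : V} (hxy : LinearIndependent K ![x, y]) (hx : f x x = g x x) (hy : f y = g y) :
    f = g := by
  let b := basisOfLinearIndependentOfCardEqFinrank hxy (by simp [hdim])
  have hxy' : f x y = g x y := by rw [hf, hg, hy]
  refine LinearMap.ext_basis b b fun i j => ?_
  fin_cases i <;> fin_cases j <;> simp [b, hx, hy, hxy']

end BilinearPairs

theorem stmt6_general {V : Type*} [AddCommGroup V] [Module ℝ V]
    (hdim : Module.finrank ℝ V = 2)
    (h hhat : V →ₗ[ℝ] V →ₗ[ℝ] ℝ)
    (hsymm : ∀ v w, h v w = h w v) (hhatsymm : ∀ v w, hhat v w = hhat w v)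
    (B : V →ₗ[ℝ] V →ₗ[ℝ] ℝ) (hBskew : ∀ v w, B v w = - B w v) (hB : B ≠ 0)
    (T That : V →ₗ[ℝ] V)
    (hT : ∀ ξ w, h (T ξ) w = B ξ w) (hThat : ∀ ξ w, hhat (That ξ) w = B ξ w)
    (key : ∀ ξ : V, hhat ξ ξ • That ξ = h ξ ξ • T ξ) :
    ∃ c : ℝ, c ≠ 0 ∧ hhat = c • h := by
  have halt : ∀ v, B v v = 0 := fun v => by linarith [hBskew v v]
  obtain ⟨ξ, hξ⟩ := LinearMap.BilinForm.exists_bilinForm_self_ne_zero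
    (ne_zero_of_comp_eq hT hB) ⟨hsymm⟩
  have hξ0 : ξ ≠ 0 := fun hξ0 => hξ (by simp [hξ0])
  have hTξ : T ξ ≠ 0 := fun hTξ => apply_ne_zero_of_isAlt_of_finrank_eq_two hdim hB halt hξ0
    (LinearMap.ext fun w => by simp [← hT ξ, hTξ])
  have hindep := linearIndependent_pair_of_apply_eq_zero hξ (by rw [hT, halt]) hTξ
  set c := hhat ξ ξ / h ξ ξ
  have hTrow : hhat (T ξ) = (c • h) (T ξ) := by
    ext u
    have hkey := congrArg (fun z => hhat z u) (key ξ)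
    simp only [map_smul, LinearMap.smul_apply, smul_eq_mul, hThat, ← hT] at hkey
    simp only [LinearMap.smul_apply, smul_eq_mul, c]
    field_simp
    linarith
  have hhat_eq : hhat = c • h := bilin_eq_of_linearIndependent_pair hdim hhatsymm
    (by simp [hsymm]) hindep (by simp [c, hξ]) hTrow
  exact ⟨c, fun hc => ne_zero_of_comp_eq hThat hB (by simp [hhat_eq, hc]), hhat_eq⟩

/-- In dimension 2: if `ĥ(ξ,ξ)·(ĥ⁻¹B)(ξ) = h(ξ,ξ)·(h⁻¹B)(ξ)` for all `ξ`, with `h, ĥ`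
non-degenerate symmetric and `B ≠ 0` skew, then `ĥ = c·h` for a nonzero constant `c`. -/
theorem stmt6 {V : Type*} [AddCommGroup V] [Module ℝ V] [FiniteDimensional ℝ V]
    (hdim : Module.finrank ℝ V = 2)
    (h hhat : V →ₗ[ℝ] V →ₗ[ℝ] ℝ)
    (hsymm : ∀ v w, h v w = h w v) (hhatsymm : ∀ v w, hhat v w = hhat w v)
    (hnd : ∀ v, (∀ w, h v w = 0) → v = 0)
    (hhatnd : ∀ v, (∀ w, hhat v w = 0) → v = 0)
    (B : V →ₗ[ℝ] V →ₗ[ℝ] ℝ) (hBskew : ∀ v w, B v w = - B w v) (hB : B ≠ 0)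
    (T That : V →ₗ[ℝ] V)
    (hT : ∀ ξ w, h (T ξ) w = B ξ w) (hThat : ∀ ξ w, hhat (That ξ) w = B ξ w)
    (key : ∀ ξ : V, hhat ξ ξ • That ξ = h ξ ξ • T ξ) :
    ∃ c : ℝ, c ≠ 0 ∧ hhat = c • h :=
  stmt6_general hdim h hhat hsymm hhatsymm B hBskew hB T That hT hThat key
end

section
/- With notation as above (g̃ = g + 2ω·dx^0 on M × ℝ, L = g_{ij}ξ^iξ^j + 2ω_lξ^lξ^0, F = g_{ij}ξ^iξ^j/(ω_lξ^l)): along a null curve with ω_lẋ^l ≡ 1/a constant, one has ∂F/∂x^k = a·∂L/∂x^k and ∂F/∂ξ^k = a·∂L/∂ξ^k, where in L one substitutes ξ^0 = ẋ^0 determined by the nullity condition 2ẋ^0 = −a g_{ij}ẋ^iẋ^j. Consequently the Euler–Lagrange equations for L imply those for F. -/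
open scoped BigOperators

/-- Partial derivative of `f` at `p` in the `k`-th coordinate direction. -/
noncomputable def pd {n : ℕ} (f : (Fin n → ℝ) → ℝ) (p : Fin n → ℝ) (k : Fin n) : ℝ :=
  fderiv ℝ f p (Pi.single k 1)

/-- `ω(ξ)`, the denominator of the Kropina metric. -/
noncomputable def Fden {n : ℕ} (ω : Fin n → (Fin n → ℝ) → ℝ) (p ξ : Fin n → ℝ) : ℝ :=
  ∑ l, ω l p * ξ l

/-- `g(ξ,ξ)`, the numerator of the Kropina metric. -/
noncomputable def Fnum {n : ℕ} (g : Fin n → Fin n → (Fin n → ℝ) → ℝ) (p ξ : Fin n → ℝ) : ℝ :=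
  ∑ i, ∑ j, g i j p * ξ i * ξ j

/-- `∂F/∂x^k` for the Kropina Lagrangian `F = g(ξ,ξ)/ω(ξ)`. -/
noncomputable def Fx {n : ℕ} (g : Fin n → Fin n → (Fin n → ℝ) → ℝ)
    (ω : Fin n → (Fin n → ℝ) → ℝ) (k : Fin n) (p ξ : Fin n → ℝ) : ℝ :=
  (Fden ω p ξ)⁻¹ * (∑ i, ∑ j, pd (g i j) p k * ξ i * ξ j)
    - ((Fden ω p ξ)⁻¹) ^ 2 * (∑ l, pd (ω l) p k * ξ l) * Fnum g p ξ

/-- `∂F/∂ξ^k` for the Kropina Lagrangian `F = g(ξ,ξ)/ω(ξ)`. -/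
noncomputable def Fxi {n : ℕ} (g : Fin n → Fin n → (Fin n → ℝ) → ℝ)
    (ω : Fin n → (Fin n → ℝ) → ℝ) (k : Fin n) (p ξ : Fin n → ℝ) : ℝ :=
  2 * (Fden ω p ξ)⁻¹ * (∑ j, g k j p * ξ j)
    - ((Fden ω p ξ)⁻¹) ^ 2 * ω k p * Fnum g p ξ

/-- A curve `x` is a (Kropina) geodesic of `F = g/ω` on `s` if `ω(x') ≠ 0` there and
the Euler–Lagrange equations `d/dt (∂F/∂ξ^k) = ∂F/∂x^k` hold. -/
def IsKropinaGeodesicOn {n : ℕ} (g : Fin n → Fin n → (Fin n → ℝ) → ℝ)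
    (ω : Fin n → (Fin n → ℝ) → ℝ) (x : ℝ → Fin n → ℝ) (s : Set ℝ) : Prop :=
  ∀ t ∈ s, Fden ω (x t) (deriv x t) ≠ 0 ∧
    ∀ k, HasDerivAt (fun u => Fxi g ω k (x u) (deriv x u))
      (Fx g ω k (x t) (deriv x t)) t

/-- Christoffel symbols `Γ_{ij}^k` of the metric `g` (`ginv` its inverse). -/
noncomputable def Christoffel {n : ℕ} (g ginv : Fin n → Fin n → (Fin n → ℝ) → ℝ)
    (i j k : Fin n) (p : Fin n → ℝ) : ℝ :=
  (1 / 2) * ∑ l, ginv k l p * (pd (g j l) p i + pd (g i l) p j - pd (g i j) p l)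

/-- `∂L/∂x^k` for the extended Lagrangian `L = g_{ij}ξ^iξ^j + 2ω_lξ^lξ^0`. -/
noncomputable def Lx {n : ℕ} (g : Fin n → Fin n → (Fin n → ℝ) → ℝ)
    (ω : Fin n → (Fin n → ℝ) → ℝ) (k : Fin n) (p ξ : Fin n → ℝ) (ξ0 : ℝ) : ℝ :=
  (∑ i, ∑ j, pd (g i j) p k * ξ i * ξ j) + 2 * (∑ l, pd (ω l) p k * ξ l) * ξ0

/-- `∂L/∂ξ^k` for the extended Lagrangian `L = g_{ij}ξ^iξ^j + 2ω_lξ^lξ^0`. -/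
noncomputable def Lxi {n : ℕ} (g : Fin n → Fin n → (Fin n → ℝ) → ℝ)
    (ω : Fin n → (Fin n → ℝ) → ℝ) (k : Fin n) (p ξ : Fin n → ℝ) (ξ0 : ℝ) : ℝ :=
  2 * (∑ j, g k j p * ξ j) + 2 * ω k p * ξ0

/-- Along a null curve with `ω_lẋ^l ≡ 1/a`, substituting
`ξ^0 = −(a/2)g_{ij}ξ^iξ^j` (the nullity condition), one has `∂F/∂x^k = a·∂L/∂x^k`
and `∂F/∂ξ^k = a·∂L/∂ξ^k`; consequently, the Euler–Lagrange equations for `L`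
imply those for the Kropina metric `F = g/ω`. -/
theorem stmt10 {n : ℕ}
    (g : Fin n → Fin n → (Fin n → ℝ) → ℝ) (ω : Fin n → (Fin n → ℝ) → ℝ)
    (hgsymm : ∀ i j, g i j = g j i) (a : ℝ) (ha : a ≠ 0) :
    (∀ (p ξ : Fin n → ℝ), Fden ω p ξ = 1 / a → ∀ k,
      Fx g ω k p ξ = a * Lx g ω k p ξ (-(a / 2) * Fnum g p ξ) ∧
      Fxi g ω k p ξ = a * Lxi g ω k p ξ (-(a / 2) * Fnum g p ξ)) ∧
    (∀ (x : ℝ → Fin n → ℝ) (x0 : ℝ → ℝ),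
      (∀ t, Fden ω (x t) (deriv x t) = 1 / a) →
      (∀ t, deriv x0 t = -(a / 2) * Fnum g (x t) (deriv x t)) →
      (∀ t k, HasDerivAt (fun u => Lxi g ω k (x u) (deriv x u) (deriv x0 u))
        (Lx g ω k (x t) (deriv x t) (deriv x0 t)) t) →
      IsKropinaGeodesicOn g ω x Set.univ) := by
  have key : ∀ (p ξ : Fin n → ℝ), Fden ω p ξ = 1 / a → ∀ k,
      Fx g ω k p ξ = a * Lx g ω k p ξ (-(a / 2) * Fnum g p ξ) ∧
      Fxi g ω k p ξ = a * Lxi g ω k p ξ (-(a / 2) * Fnum g p ξ) := by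
    intro p ξ h k
    have hinv : (Fden ω p ξ)⁻¹ = a := by rw [h]; field_simp
    constructor
    · unfold Fx Lx; rw [hinv]; ring
    · unfold Fxi Lxi; rw [hinv]; ring
  refine ⟨key, ?_⟩
  intro x x0 hF hx0 hEL
  intro t _
  have hne : Fden ω (x t) (deriv x t) ≠ 0 := by
    rw [hF t]; simpa using ha
  refine ⟨hne, fun k => ?_⟩
  have hfun : (fun u => Fxi g ω k (x u) (deriv x u))
      = fun u => a * Lxi g ω k (x u) (deriv x u) (deriv x0 u) := by
    funext u
    rw [hx0 u]
    exact ((key (x u) (deriv x u) (hF u) k).2)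
  rw [hfun, (key (x t) (deriv x t) (hF t) k).1, ← hx0 t]
  exact (hEL t k).const_mul a
end

section
/- Let V be a finite-dimensional real vector space, g a symmetric bilinear form on V non-degenerate on a hyperplane H = ker ω (ω a nonzero functional). Then there exists a linear functional f on V with ker f = H such that g + ω·f (symmetrized product) is non-degenerate on all of V; if moreover g restricted to H is positive definite, f can be chosen so that g + ω·f is positive definite. -/
/-!
Choose `Y` with `ω Y = 1` that is `g`-orthogonal to `H = ker ω`; it exists because `g|_H` is
non-degenerate, so the functional `g X` on `H` is represented by some `p ∈ H` and `Y = X - p`.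
With `f = c • ω` and `v = ω v • Y + h`, `h ∈ H`, the form `g + ω·f` splits orthogonally as
`(g + ω·f)(v, v) = ω(v)² (g(Y, Y) + c) + g(h, h)`, so any `c ≠ 0` with `g(Y, Y) + c > 0` works.
-/

namespace LinearMap

variable {K V : Type*} [Field K] [AddCommGroup V] [Module K V]
  {g : V →ₗ[K] V →ₗ[K] K} {ω : V →ₗ[K] K}

theorem exists_apply_eq_one_and_orthogonal_ker [FiniteDimensional K V]
    (hg : ∀ v w, g v w = g w v) (hω : ω ≠ 0)
    (hnd : ∀ v, ω v = 0 → (∀ w, ω w = 0 → g v w = 0) → v = 0) :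
    ∃ Y : V, ω Y = 1 ∧ ∀ w, ω w = 0 → g Y w = 0 := by
  obtain ⟨X, hX⟩ := surjective_of_ne_zero hω 1
  let B : LinearMap.BilinForm K (ker ω) := (g.domRestrict (ker ω)).compl₂ (ker ω).subtype
  have hB : B.Nondegenerate :=
    ⟨fun v hv => Subtype.ext (hnd v v.2 fun w hw => hv ⟨w, hw⟩),
      fun v hv => Subtype.ext (hnd v v.2 fun w hw => (hg _ _).trans (hv ⟨w, hw⟩))⟩
  let p : ker ω := (B.toDual hB).symm ((g X).domRestrict (ker ω))
  refine ⟨X - p, by simp [hX], fun w hw => ?_⟩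
  have hp : B p ⟨w, hw⟩ = g X w := BilinForm.apply_toDual_symm_apply _ _
  simp only [B, compl₂_apply, domRestrict_apply, Submodule.coe_subtype] at hp
  simp [hp]

section OrthogonalSplitting

variable {Y : V} (hωY : ω Y = 1) (hgY : ∀ w, ω w = 0 → g Y w = 0)
include hωY

theorem apply_sub_smul_eq_zero (v : V) : ω (v - ω v • Y) = 0 := by
  simp [hωY]

include hgY

theorem apply_left_eq_mul (v : V) : g Y v = ω v * g Y Y := by
  have h := hgY _ (apply_sub_smul_eq_zero hωY v)
  rwa [map_sub, map_smul, smul_eq_mul, sub_eq_zero] at h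

theorem apply_self_eq_sq_mul_add (hg : ∀ v w, g v w = g w v) (v : V) :
    g v v = ω v ^ 2 * g Y Y + g (v - ω v • Y) (v - ω v • Y) := by
  have hh := hgY _ (apply_sub_smul_eq_zero hωY v)
  conv_lhs => rw [← sub_add_cancel v (ω v • Y)]
  simp only [map_add, map_smul, add_apply, smul_apply, smul_eq_mul, hh, hg _ Y]
  ring

theorem eq_zero_of_forall_add_mul_eq_zero (hg : ∀ v w, g v w = g w v)
    (hnd : ∀ v, ω v = 0 → (∀ w, ω w = 0 → g v w = 0) → v = 0) {c : K} (hc : g Y Y + c ≠ 0)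
    {v : V} (hv : ∀ w, g v w + c * ω v * ω w = 0) : v = 0 := by
  have hωv : ω v = 0 := by
    have hvY := hv Y
    rw [hg, apply_left_eq_mul hωY hgY, hωY] at hvY
    exact (mul_eq_zero.mp (by linear_combination hvY)).resolve_right hc
  exact hnd v hωv fun w _ => by simpa [hωv] using hv w

theorem apply_self_add_mul_pos [LinearOrder K] [IsStrictOrderedRing K] (hg : ∀ v w, g v w = g w v)
    (hpos : ∀ v, ω v = 0 → v ≠ 0 → 0 < g v v) {c : K} (hc : 0 < g Y Y + c)
    {v : V} (hv : v ≠ 0) : 0 < g v v + ω v * (c * ω v) := by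
  set h := v - ω v • Y
  have hωh : ω h = 0 := apply_sub_smul_eq_zero hωY v
  have hgh : 0 ≤ g h h := by
    rcases eq_or_ne h 0 with h0 | h0
    · simp [h0]
    · exact (hpos h hωh h0).le
  rw [apply_self_eq_sq_mul_add hωY hgY hg v]
  rcases eq_or_ne (ω v) 0 with hωv | hωv
  · have hhv : h = v := by simp [h, hωv]
    simpa [hωv, hhv] using hpos v hωv hv
  · nlinarith [mul_pos (sq_pos_of_ne_zero hωv) hc]

end OrthogonalSplitting

end LinearMap

/-- A degenerate symmetric form `g` which is non-degenerate on the hyperplane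
`H = ker ω` can be made non-degenerate (resp. positive definite, if `g|_H` is)
on all of `V` by adding the symmetrized product `ω·f` for a suitable functional
`f` with `ker f = H`. -/
theorem stmt12 {V : Type*} [AddCommGroup V] [Module ℝ V] [FiniteDimensional ℝ V]
    (g : V →ₗ[ℝ] V →ₗ[ℝ] ℝ) (hg : ∀ v w, g v w = g w v)
    (ω : V →ₗ[ℝ] ℝ) (hω : ω ≠ 0)
    (hnd : ∀ v, ω v = 0 → (∀ w, ω w = 0 → g v w = 0) → v = 0) :
    (∃ f : V →ₗ[ℝ] ℝ, (∀ v, f v = 0 ↔ ω v = 0) ∧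
      ∀ v : V, (∀ w, g v w + (ω v * f w + ω w * f v) / 2 = 0) → v = 0) ∧
    ((∀ v, ω v = 0 → v ≠ 0 → 0 < g v v) →
      ∃ f : V →ₗ[ℝ] ℝ, (∀ v, f v = 0 ↔ ω v = 0) ∧
        ∀ v : V, v ≠ 0 → 0 < g v v + ω v * f v) := by
  obtain ⟨Y, hωY, hgY⟩ := LinearMap.exists_apply_eq_one_and_orthogonal_ker hg hω hnd
  set c := 1 + |g Y Y|
  have hc : 0 < g Y Y + c := by linarith [neg_abs_le (g Y Y)]
  have hker : ∀ v, (c • ω) v = 0 ↔ ω v = 0 := by simp [c, (by positivity : c ≠ 0)]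
  refine ⟨⟨c • ω, hker, fun v hv => ?_⟩, fun hpos => ⟨c • ω, hker, fun v hv => ?_⟩⟩
  · refine LinearMap.eq_zero_of_forall_add_mul_eq_zero hωY hgY hg hnd hc.ne' fun w => ?_
    linear_combination (by simpa using hv w : g v w + (ω v * (c * ω w) + ω w * (c * ω v)) / 2 = 0)
  · exact LinearMap.apply_self_add_mul_pos hωY hgY hg hpos hc hv
end
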